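/- arXiv:2304.00479 — 3 statements merged into one kernel-verified Lean document; each statement's English description precedes it below -/
import Mathlib

section
/- Let f : 3^N → ℝ be bisubmodular with f(∅,∅) = 0, viewed via ternary encodings as a function on {0,±1}^n. Then the convex hull of the epigraph {(x,w) ∈ {0,±1}^n × ℝ : w ≥ f(x)} is described completely by all extremal poly-bimatroid inequalities w ≥ π^⊤x (one for each permutation δ of N and each sign vector σ ∈ {±1}^n, with π produced by the signed greedy procedure) together with the trivial inequalities −1 ≤ x_i ≤ 1 for all i ∈ {1,…,n}. -/
open scoped Classical

/-- `f : 3^N → ℝ` (defined on ordered pairs of disjoint subsets of `N`) is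
bisubmodular if `f(X) + f(Y) ≥ f(X ⊓ Y) + f(X ⊔ Y)` for all bisets `X, Y`,
where `X ⊓ Y = (X_1∩Y_1, X_2∩Y_2)` and
`X ⊔ Y = ((X_1∪Y_1)\(X_2∪Y_2), (X_2∪Y_2)\(X_1∪Y_1))`. -/
def Bisubmodular {n : ℕ} (f : Finset (Fin n) → Finset (Fin n) → ℝ) : Prop :=
  ∀ X1 X2 Y1 Y2 : Finset (Fin n), Disjoint X1 X2 → Disjoint Y1 Y2 →
    f (X1 ∩ Y1) (X2 ∩ Y2) +
        f ((X1 ∪ Y1) \ (X2 ∪ Y2)) ((X2 ∪ Y2) \ (X1 ∪ Y1)) ≤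
      f X1 X2 + f Y1 Y2

/-- First component built by the signed greedy procedure before processing
position `i`: the elements `δ_l` with `l < i` and sign `+1`. -/
noncomputable def sgFirst {n : ℕ} (δ : Equiv.Perm (Fin n)) (σ : Fin n → ℝ)
    (i : Fin n) : Finset (Fin n) :=
  (Finset.univ.filter (fun l : Fin n => l < i ∧ σ (δ l) = 1)).image δ

/-- Second component built by the signed greedy procedure before processing
position `i`: the elements `δ_l` with `l < i` and sign `−1`. -/
noncomputable def sgSecond {n : ℕ} (δ : Equiv.Perm (Fin n)) (σ : Fin n → ℝ)
    (i : Fin n) : Finset (Fin n) :=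
  (Finset.univ.filter (fun l : Fin n => l < i ∧ σ (δ l) ≠ 1)).image δ

/-- The coefficient vector `π` output by the signed greedy procedure for a
permutation `δ` and a sign vector `σ ∈ {±1}^n`. -/
noncomputable def signedGreedy {n : ℕ} (f : Finset (Fin n) → Finset (Fin n) → ℝ)
    (δ : Equiv.Perm (Fin n)) (σ : Fin n → ℝ) : Fin n → ℝ :=
  fun j =>
    if σ j = 1 then
      f (insert j (sgFirst δ σ (δ.symm j))) (sgSecond δ σ (δ.symm j)) -
        f (sgFirst δ σ (δ.symm j)) (sgSecond δ σ (δ.symm j))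
    else
      -f (sgFirst δ σ (δ.symm j)) (insert j (sgSecond δ σ (δ.symm j))) +
        f (sgFirst δ σ (δ.symm j)) (sgSecond δ σ (δ.symm j))

open Finset

/-!
Let `π` be the signed greedy vector of `(δ, σ)` and `C₀ ⊑ C₁ ⊑ ⋯ ⊑ Cₙ` the chain of bisets it
builds. Validity: `g = f - ⟨π, ·⟩` is again bisubmodular (the subtracted term is modular) and
vanishes on the chain. If `X` contains `C_k`, the meet of `X` and `C_{k+1}` is `C_k` or `C_{k+1}`,
so joining `X` with `C_{k+1}` does not increase `g`; two such joins give a biset containing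
`C_{k+1}`, and descending induction on `k` down to `C₀ = (∅, ∅)` shows `g ≥ 0`.

Completeness: for `x` in the box let `σ` be the sign pattern of `x` and let `δ` sort `|x|`
decreasingly. Then `x` is the convex combination of the chain vectors with the consecutive
differences of `1 ≥ |x_{δ 0}| ≥ ⋯ ≥ |x_{δ (n-1)}| ≥ 0` as weights; as `π` is tight on the chain,
the same combination of the epigraph points `(C_k, f C_k)` is `(x, ⟨π, x⟩)`, and the epigraph is
closed upwards in `w`.
-/

theorem Finset.sum_range_succ_ite_lt_sub {M : Type*} [AddCommGroup M] (s : ℕ → M) {p m : ℕ}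
    (hpm : p ≤ m) :
    ∑ k ∈ range (m + 1), (if p < k then s k - s (k + 1) else 0) = s (p + 1) - s (m + 1) := by
  have hIco : (range (m + 1)).filter (p < ·) = Ico (p + 1) (m + 1) := by
    ext; simp only [mem_filter, mem_range, mem_Ico]; omega
  rw [← sum_filter, hIco, sum_Ico_eq_sub _ (by omega), sum_range_sub', sum_range_sub']
  abel

open scoped Pointwise in
theorem add_mem_convexHull_of_add_mem {𝕜 E : Type*} [Ring 𝕜] [PartialOrder 𝕜] [AddCommGroup E]
    [Module 𝕜 E] {C : Set E} {v q : E} (hC : ∀ p ∈ C, v + p ∈ C) (hq : q ∈ convexHull 𝕜 C) :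
    v + q ∈ convexHull 𝕜 C := by
  have hvC : v +ᵥ C ⊆ C := by rintro _ ⟨p, hp, rfl⟩; exact hC p hp
  refine convexHull_mono hvC ?_
  rw [convexHull_vadd]
  exact Set.vadd_mem_vadd_set hq

theorem convex_setOf_sum_mul_le {ι : Type*} [Fintype ι] (π : ι → ℝ) :
    Convex ℝ {p : (ι → ℝ) × ℝ | ∑ j, π j * p.1 j ≤ p.2} := by
  have hlin : IsLinearMap ℝ fun p : (ι → ℝ) × ℝ => ∑ j, π j * p.1 j - p.2 :=
    ⟨fun p q => by
      simp only [Prod.fst_add, Prod.snd_add, Pi.add_apply, mul_add, sum_add_distrib]; ring,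
     fun c p => by
      simp only [Prod.smul_fst, Prod.smul_snd, Pi.smul_apply, smul_eq_mul, mul_sub, mul_sum,
        mul_left_comm c]⟩
  simpa only [sub_nonpos] using convex_halfSpace_le hlin 0

section Ternary

variable {α : Type*} [DecidableEq α]

noncomputable def ternary (S₁ S₂ : Finset α) (i : α) : ℝ :=
  if i ∈ S₁ then 1 else if i ∈ S₂ then -1 else 0

theorem ternary_mem_Icc (S₁ S₂ : Finset α) (i : α) : ternary S₁ S₂ i ∈ Set.Icc (-1) 1 := by
  unfold ternary; split_ifs <;> norm_num

theorem ternary_inf_add_ternary_sup {X₁ X₂ Y₁ Y₂ : Finset α} (hX : Disjoint X₁ X₂)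
    (hY : Disjoint Y₁ Y₂) (i : α) :
    ternary (X₁ ∩ Y₁) (X₂ ∩ Y₂) i + ternary ((X₁ ∪ Y₁) \ (X₂ ∪ Y₂)) ((X₂ ∪ Y₂) \ (X₁ ∪ Y₁)) i =
      ternary X₁ X₂ i + ternary Y₁ Y₂ i := by
  have hX' : i ∈ X₁ → i ∉ X₂ := fun h => disjoint_left.mp hX h
  have hY' : i ∈ Y₁ → i ∉ Y₂ := fun h => disjoint_left.mp hY h
  unfold ternary
  by_cases h₁ : i ∈ X₁ <;> by_cases h₂ : i ∈ X₂ <;> by_cases h₃ : i ∈ Y₁ <;>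
    by_cases h₄ : i ∈ Y₂ <;> simp_all

end Ternary

theorem Bisubmodular.sub_sum_mul_ternary {n : ℕ} {f : Finset (Fin n) → Finset (Fin n) → ℝ}
    (hf : Bisubmodular f) (π : Fin n → ℝ) :
    Bisubmodular fun S₁ S₂ => f S₁ S₂ - ∑ j, π j * ternary S₁ S₂ j := by
  intro X₁ X₂ Y₁ Y₂ hX hY
  have hmod := congrArg (fun v => ∑ j, π j * v j) (funext (ternary_inf_add_ternary_sup hX hY))
  simp only [mul_add, sum_add_distrib] at hmod
  linarith [hf X₁ X₂ Y₁ Y₂ hX hY]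

namespace SignedGreedy

variable {n : ℕ} (δ : Equiv.Perm (Fin n)) (σ : Fin n → ℝ)

noncomputable def chainFst (k : ℕ) : Finset (Fin n) :=
  univ.filter fun m => (δ.symm m : ℕ) < k ∧ σ m = 1

noncomputable def chainSnd (k : ℕ) : Finset (Fin n) :=
  univ.filter fun m => (δ.symm m : ℕ) < k ∧ σ m ≠ 1

theorem disjoint_chainFst_chainSnd (k : ℕ) : Disjoint (chainFst δ σ k) (chainSnd δ σ k) :=
  disjoint_left.mpr fun _ h₁ h₂ => (mem_filter.mp h₂).2.2 (mem_filter.mp h₁).2.2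

variable {δ σ}

@[simp]
theorem mem_chainFst {k : ℕ} {m : Fin n} :
    m ∈ chainFst δ σ k ↔ (δ.symm m : ℕ) < k ∧ σ m = 1 := by
  simp [chainFst]

@[simp]
theorem mem_chainSnd {k : ℕ} {m : Fin n} :
    m ∈ chainSnd δ σ k ↔ (δ.symm m : ℕ) < k ∧ σ m ≠ 1 := by
  simp [chainSnd]

theorem sgFirst_eq_chainFst (i : Fin n) : sgFirst δ σ i = chainFst δ σ i := by
  ext m
  simp [sgFirst, ← Equiv.eq_symm_apply]

theorem sgSecond_eq_chainSnd (i : Fin n) : sgSecond δ σ i = chainSnd δ σ i := by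
  ext m
  simp [sgSecond, ← Equiv.eq_symm_apply]

@[simp]
theorem chainFst_zero : chainFst δ σ 0 = ∅ := by
  ext; simp

@[simp]
theorem chainSnd_zero : chainSnd δ σ 0 = ∅ := by
  ext; simp

theorem chainFst_mono : Monotone (chainFst δ σ) := fun _ _ hkl _ hm => by
  simp only [mem_chainFst] at hm ⊢; exact ⟨hm.1.trans_le hkl, hm.2⟩

theorem chainSnd_mono : Monotone (chainSnd δ σ) := fun _ _ hkl _ hm => by
  simp only [mem_chainSnd] at hm ⊢; exact ⟨hm.1.trans_le hkl, hm.2⟩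

theorem symm_lt_succ_iff {k : ℕ} (hk : k < n) {m : Fin n} :
    (δ.symm m : ℕ) < k + 1 ↔ (δ.symm m : ℕ) < k ∨ m = δ ⟨k, hk⟩ := by
  rw [Nat.lt_succ_iff_lt_or_eq, ← δ.symm_apply_eq, Fin.ext_iff]

theorem chainFst_succ {k : ℕ} (hk : k < n) :
    chainFst δ σ (k + 1) =
      if σ (δ ⟨k, hk⟩) = 1 then insert (δ ⟨k, hk⟩) (chainFst δ σ k) else chainFst δ σ k := by
  ext m
  split_ifs with h <;> simp only [mem_chainFst, mem_insert, symm_lt_succ_iff hk] <;> aesop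

theorem chainSnd_succ {k : ℕ} (hk : k < n) :
    chainSnd δ σ (k + 1) =
      if σ (δ ⟨k, hk⟩) = 1 then chainSnd δ σ k else insert (δ ⟨k, hk⟩) (chainSnd δ σ k) := by
  ext m
  split_ifs with h <;> simp only [mem_chainSnd, mem_insert, symm_lt_succ_iff hk] <;> aesop

theorem eq_chain_top_of_subset {X₁ X₂ : Finset (Fin n)} (hX : Disjoint X₁ X₂)
    (h₁ : chainFst δ σ n ⊆ X₁) (h₂ : chainSnd δ σ n ⊆ X₂) :
    X₁ = chainFst δ σ n ∧ X₂ = chainSnd δ σ n := by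
  constructor <;> refine subset_antisymm (fun m hm => ?_) ‹_›
  · exact mem_chainFst.mpr ⟨(δ.symm m).isLt, by_contra fun h =>
      disjoint_left.mp hX hm (h₂ (mem_chainSnd.mpr ⟨(δ.symm m).isLt, h⟩))⟩
  · exact mem_chainSnd.mpr ⟨(δ.symm m).isLt, fun h =>
      disjoint_left.mp hX (h₁ (mem_chainFst.mpr ⟨(δ.symm m).isLt, h⟩)) hm⟩

theorem exists_inter_chain_succ_eq {k : ℕ} (hk : k < n) {X₁ X₂ : Finset (Fin n)}
    (h₁ : chainFst δ σ k ⊆ X₁) (h₂ : chainSnd δ σ k ⊆ X₂) :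
    ∃ l ≤ k + 1, X₁ ∩ chainFst δ σ (k + 1) = chainFst δ σ l ∧
      X₂ ∩ chainSnd δ σ (k + 1) = chainSnd δ σ l := by
  set j := δ ⟨k, hk⟩
  rw [chainFst_succ hk, chainSnd_succ hk]
  by_cases hσ : σ j = 1
  · rw [if_pos hσ, if_pos hσ, inter_eq_right.mpr h₂]
    by_cases hj : j ∈ X₁
    · exact ⟨k + 1, le_rfl, by rw [inter_insert_of_mem hj, inter_eq_right.mpr h₁,
        chainFst_succ hk, if_pos hσ], by rw [chainSnd_succ hk, if_pos hσ]⟩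
    · exact ⟨k, k.le_succ, by rw [inter_insert_of_notMem hj, inter_eq_right.mpr h₁], rfl⟩
  · rw [if_neg hσ, if_neg hσ, inter_eq_right.mpr h₁]
    by_cases hj : j ∈ X₂
    · exact ⟨k + 1, le_rfl, by rw [chainFst_succ hk, if_neg hσ], by
        rw [inter_insert_of_mem hj, inter_eq_right.mpr h₂, chainSnd_succ hk, if_neg hσ]⟩
    · exact ⟨k, k.le_succ, rfl, by rw [inter_insert_of_notMem hj, inter_eq_right.mpr h₂]⟩

end SignedGreedy


namespace Bisubmodular

open SignedGreedy

variable {n : ℕ} {g : Finset (Fin n) → Finset (Fin n) → ℝ} {δ : Equiv.Perm (Fin n)}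
  {σ : Fin n → ℝ}

theorem join_chain_succ_le (hg : Bisubmodular g)
    (hC : ∀ k ≤ n, g (chainFst δ σ k) (chainSnd δ σ k) = 0) {k : ℕ} (hk : k < n)
    {X₁ X₂ : Finset (Fin n)} (hX : Disjoint X₁ X₂) (h₁ : chainFst δ σ k ⊆ X₁)
    (h₂ : chainSnd δ σ k ⊆ X₂) :
    g ((X₁ ∪ chainFst δ σ (k + 1)) \ (X₂ ∪ chainSnd δ σ (k + 1)))
        ((X₂ ∪ chainSnd δ σ (k + 1)) \ (X₁ ∪ chainFst δ σ (k + 1))) ≤ g X₁ X₂ := by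
  obtain ⟨l, hl, hl₁, hl₂⟩ := exists_inter_chain_succ_eq hk h₁ h₂
  have := hg _ _ _ _ hX (disjoint_chainFst_chainSnd δ σ (k + 1))
  rw [hl₁, hl₂, hC l (by omega), hC (k + 1) hk] at this
  linarith

theorem nonneg_of_chain_eq_zero_of_subset (hg : Bisubmodular g)
    (hC : ∀ k ≤ n, g (chainFst δ σ k) (chainSnd δ σ k) = 0) {k : ℕ} (hk : k ≤ n) :
    ∀ X₁ X₂, Disjoint X₁ X₂ → chainFst δ σ k ⊆ X₁ → chainSnd δ σ k ⊆ X₂ → 0 ≤ g X₁ X₂ := by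
  induction hk using Nat.decreasingInduction with
  | self =>
    intro X₁ X₂ hX h₁ h₂
    obtain ⟨rfl, rfl⟩ := eq_chain_top_of_subset hX h₁ h₂
    exact (hC n le_rfl).ge
  | of_succ k hk ih =>
    intro X₁ X₂ hX h₁ h₂
    -- joining twice with the next chain member puts its new element on its side
    set C₁ := chainFst δ σ (k + 1)
    set C₂ := chainSnd δ σ (k + 1)
    have hC₁₂ : Disjoint C₁ C₂ := disjoint_chainFst_chainSnd δ σ (k + 1)
    set Y₁ := (X₁ ∪ C₁) \ (X₂ ∪ C₂)
    set Y₂ := (X₂ ∪ C₂) \ (X₁ ∪ C₁)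
    have hY : Disjoint Y₁ Y₂ := disjoint_sdiff_self_left.mono_right sdiff_subset
    have hY₁ : chainFst δ σ k ⊆ Y₁ := subset_sdiff.mpr ⟨h₁.trans subset_union_left,
      disjoint_union_right.mpr ⟨hX.mono_left h₁, hC₁₂.mono_left (chainFst_mono k.le_succ)⟩⟩
    have hY₂ : chainSnd δ σ k ⊆ Y₂ := subset_sdiff.mpr ⟨h₂.trans subset_union_left,
      disjoint_union_right.mpr ⟨hX.symm.mono_left h₂,
        hC₁₂.symm.mono_left (chainSnd_mono k.le_succ)⟩⟩
    have hC₁ : C₁ ⊆ (Y₁ ∪ C₁) \ (Y₂ ∪ C₂) := subset_sdiff.mpr ⟨subset_union_right,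
      disjoint_union_right.mpr ⟨disjoint_sdiff.mono_left subset_union_right, hC₁₂⟩⟩
    have hC₂ : C₂ ⊆ (Y₂ ∪ C₂) \ (Y₁ ∪ C₁) := subset_sdiff.mpr ⟨subset_union_right,
      disjoint_union_right.mpr ⟨disjoint_sdiff.mono_left subset_union_right, hC₁₂.symm⟩⟩
    calc 0 ≤ g ((Y₁ ∪ C₁) \ (Y₂ ∪ C₂)) ((Y₂ ∪ C₂) \ (Y₁ ∪ C₁)) :=
          ih _ _ (disjoint_sdiff_self_left.mono_right sdiff_subset) hC₁ hC₂
      _ ≤ g Y₁ Y₂ := hg.join_chain_succ_le hC hk hY hY₁ hY₂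
      _ ≤ g X₁ X₂ := hg.join_chain_succ_le hC hk hX h₁ h₂

theorem nonneg_of_chain_eq_zero (hg : Bisubmodular g)
    (hC : ∀ k ≤ n, g (chainFst δ σ k) (chainSnd δ σ k) = 0) {X₁ X₂ : Finset (Fin n)}
    (hX : Disjoint X₁ X₂) : 0 ≤ g X₁ X₂ :=
  hg.nonneg_of_chain_eq_zero_of_subset hC n.zero_le X₁ X₂ hX (by simp) (by simp)

end Bisubmodular

def ternaryEpigraph {n : ℕ} (f : Finset (Fin n) → Finset (Fin n) → ℝ) :
    Set ((Fin n → ℝ) × ℝ) :=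
  {p | ∃ S₁ S₂ : Finset (Fin n), Disjoint S₁ S₂ ∧ (∀ i, p.1 i = ternary S₁ S₂ i) ∧ f S₁ S₂ ≤ p.2}

namespace SignedGreedy

variable {n : ℕ} {f : Finset (Fin n) → Finset (Fin n) → ℝ} {δ : Equiv.Perm (Fin n)}
  {σ : Fin n → ℝ}

theorem ternary_chain_apply (hσ : ∀ j, σ j = 1 ∨ σ j = -1) (k : ℕ) (m : Fin n) :
    ternary (chainFst δ σ k) (chainSnd δ σ k) m = if (δ.symm m : ℕ) < k then σ m else 0 := by
  rcases hσ m with h | h <;> by_cases hk : (δ.symm m : ℕ) < k <;>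
    simp [ternary, hk, h, show (-1 : ℝ) ≠ 1 by norm_num]

theorem mul_signedGreedy_eq_sub (hσ : ∀ j, σ j = 1 ∨ σ j = -1) {k : ℕ} (hk : k < n) :
    σ (δ ⟨k, hk⟩) * signedGreedy f δ σ (δ ⟨k, hk⟩) =
      f (chainFst δ σ (k + 1)) (chainSnd δ σ (k + 1)) - f (chainFst δ σ k) (chainSnd δ σ k) := by
  have hsymm : δ.symm (δ ⟨k, hk⟩) = ⟨k, hk⟩ := δ.symm_apply_apply _
  rw [chainFst_succ hk, chainSnd_succ hk, signedGreedy, hsymm, sgFirst_eq_chainFst,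
    sgSecond_eq_chainSnd]
  rcases hσ (δ ⟨k, hk⟩) with h | h
  · simp only [h, if_true]; ring
  · simp only [h, show (-1 : ℝ) ≠ 1 by norm_num, if_false]; ring

theorem sum_mul_ternary_chain (h0 : f ∅ ∅ = 0) (hσ : ∀ j, σ j = 1 ∨ σ j = -1) {k : ℕ}
    (hk : k ≤ n) :
    ∑ i, signedGreedy f δ σ i * ternary (chainFst δ σ k) (chainSnd δ σ k) i =
      f (chainFst δ σ k) (chainSnd δ σ k) := by
  induction k with
  | zero => simp [ternary, h0]
  | succ k ih =>
    have hk' : k < n := hk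
    have hstep (i : Fin n) : ternary (chainFst δ σ (k + 1)) (chainSnd δ σ (k + 1)) i =
        ternary (chainFst δ σ k) (chainSnd δ σ k) i + if i = δ ⟨k, hk'⟩ then σ i else 0 := by
      simp only [ternary_chain_apply hσ, symm_lt_succ_iff hk']
      by_cases hi : i = δ ⟨k, hk'⟩ <;> simp [hi]
    simp only [hstep, mul_add, sum_add_distrib, ih hk'.le, mul_ite, mul_zero, sum_ite_eq',
      mem_univ, if_true]
    linarith [mul_signedGreedy_eq_sub (f := f) (δ := δ) hσ hk']

theorem sum_mul_ternary_le (hf : Bisubmodular f) (h0 : f ∅ ∅ = 0)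
    (hσ : ∀ j, σ j = 1 ∨ σ j = -1) {X₁ X₂ : Finset (Fin n)} (hX : Disjoint X₁ X₂) :
    ∑ j, signedGreedy f δ σ j * ternary X₁ X₂ j ≤ f X₁ X₂ :=
  sub_nonneg.mp <| (hf.sub_sum_mul_ternary _).nonneg_of_chain_eq_zero (δ := δ) (σ := σ)
    (fun _ hk => sub_eq_zero.mpr (sum_mul_ternary_chain h0 hσ hk).symm) hX

noncomputable def level (x : Fin n → ℝ) (δ : Equiv.Perm (Fin n)) : ℕ → ℝ
  | 0 => 1
  | k + 1 => if h : k < n then |x (δ ⟨k, h⟩)| else 0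

theorem level_succ_val (x : Fin n → ℝ) (δ : Equiv.Perm (Fin n)) (p : Fin n) :
    level x δ (p + 1) = |x (δ p)| := by
  simp [level]

theorem level_succ_self (x : Fin n → ℝ) (δ : Equiv.Perm (Fin n)) : level x δ (n + 1) = 0 := by
  simp [level]

theorem level_succ_le {x : Fin n → ℝ} (hx : ∀ i, |x i| ≤ 1)
    (hδ : Antitone fun i => |x (δ i)|) (k : ℕ) : level x δ (k + 1) ≤ level x δ k := by
  rcases k with _ | k
  · simp only [level]; split_ifs <;> simp [hx]
  · simp only [level]
    split_ifs with h₁ h₂ h₂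
    · exact hδ (Fin.mk_le_mk.mpr k.le_succ)
    · omega
    · exact abs_nonneg _
    · rfl

theorem sum_level_smul_ternary_chain {x : Fin n → ℝ} (hσ : ∀ j, σ j = 1 ∨ σ j = -1)
    (hxσ : ∀ j, x j = σ j * |x j|) :
    ∑ k ∈ range (n + 1), (level x δ k - level x δ (k + 1)) •
      ternary (chainFst δ σ k) (chainSnd δ σ k) = x := by
  funext j
  set p := δ.symm j
  calc (∑ k ∈ range (n + 1), (level x δ k - level x δ (k + 1)) •
        ternary (chainFst δ σ k) (chainSnd δ σ k)) j
      = (∑ k ∈ range (n + 1), if (p : ℕ) < k then level x δ k - level x δ (k + 1) else 0) *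
          σ j := by
        simp only [Finset.sum_apply, sum_mul, Pi.smul_apply, smul_eq_mul, ternary_chain_apply hσ]
        exact sum_congr rfl fun k _ => by split_ifs <;> ring
    _ = x j := by
        rw [sum_range_succ_ite_lt_sub _ p.isLt.le, level_succ_val, level_succ_self,
          Equiv.apply_symm_apply]
        linarith [hxσ j]

theorem mk_sum_mul_mem_convexHull (h0 : f ∅ ∅ = 0) (hσ : ∀ j, σ j = 1 ∨ σ j = -1)
    {x : Fin n → ℝ} (hx : ∀ i, |x i| ≤ 1) (hxσ : ∀ j, x j = σ j * |x j|)
    (hδ : Antitone fun i => |x (δ i)|) :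
    (x, ∑ j, signedGreedy f δ σ j * x j) ∈ convexHull ℝ (ternaryEpigraph f) := by
  set w : ℕ → ℝ := fun k => level x δ k - level x δ (k + 1)
  set t : ℕ → Fin n → ℝ := fun k => ternary (chainFst δ σ k) (chainSnd δ σ k)
  have hx_eq : ∑ k ∈ range (n + 1), w k • t k = x := sum_level_smul_ternary_chain hσ hxσ
  have hvalue : ∑ k ∈ range (n + 1), w k * f (chainFst δ σ k) (chainSnd δ σ k) =
      ∑ j, signedGreedy f δ σ j * x j := by
    calc _ = ∑ k ∈ range (n + 1), w k * ∑ j, signedGreedy f δ σ j * t k j :=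
          sum_congr rfl fun k hk => by
            rw [sum_mul_ternary_chain h0 hσ (Nat.lt_succ_iff.mp (mem_range.mp hk))]
      _ = ∑ j, signedGreedy f δ σ j * (∑ k ∈ range (n + 1), w k • t k) j := by
          simp only [Finset.sum_apply, Pi.smul_apply, smul_eq_mul, mul_sum]
          rw [sum_comm]
          exact sum_congr rfl fun j _ => sum_congr rfl fun k _ => by ring
      _ = _ := by rw [hx_eq]
  have hpoint : (x, ∑ j, signedGreedy f δ σ j * x j) =
      ∑ k ∈ range (n + 1), w k • (t k, f (chainFst δ σ k) (chainSnd δ σ k)) :=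
    Prod.ext (by simp [Prod.fst_sum, hx_eq]) (by simp [Prod.snd_sum, hvalue])
  rw [hpoint]
  refine (convex_convexHull ℝ _).sum_mem (fun k _ => sub_nonneg.mpr (level_succ_le hx hδ k))
    ?_ fun k _ => subset_convexHull ℝ _
      ⟨_, _, disjoint_chainFst_chainSnd δ σ k, fun _ => rfl, le_rfl⟩
  rw [sum_range_sub', level_succ_self]
  simp [level]

end SignedGreedy

def greedyPolyhedron {n : ℕ} (f : Finset (Fin n) → Finset (Fin n) → ℝ) :
    Set ((Fin n → ℝ) × ℝ) :=
  {p | (∀ i, -1 ≤ p.1 i ∧ p.1 i ≤ 1) ∧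
    ∀ (δ : Equiv.Perm (Fin n)) (σ : Fin n → ℝ), (∀ j, σ j = 1 ∨ σ j = -1) →
      ∑ j : Fin n, signedGreedy f δ σ j * p.1 j ≤ p.2}

section Polyhedron

variable {n : ℕ} {f : Finset (Fin n) → Finset (Fin n) → ℝ}

theorem ternaryEpigraph_subset_greedyPolyhedron (hf : Bisubmodular f) (h0 : f ∅ ∅ = 0) :
    ternaryEpigraph f ⊆ greedyPolyhedron f := by
  rintro p ⟨S₁, S₂, hS, hp, hfp⟩
  refine ⟨fun i => hp i ▸ ternary_mem_Icc S₁ S₂ i, fun δ σ hσ => ?_⟩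
  simp only [hp]
  exact (SignedGreedy.sum_mul_ternary_le hf h0 hσ hS).trans hfp

theorem convex_greedyPolyhedron (f : Finset (Fin n) → Finset (Fin n) → ℝ) :
    Convex ℝ (greedyPolyhedron f) := by
  simp only [greedyPolyhedron, Set.ofPred_and, Set.ofPred_forall]
  refine (convex_iInter fun i => ?_).inter (convex_iInter fun δ => convex_iInter fun σ =>
    convex_iInter fun _ => convex_setOf_sum_mul_le _)
  exact (convex_Icc (-1 : ℝ) 1).linear_preimage
    ((LinearMap.proj (R := ℝ) (φ := fun _ : Fin n => ℝ) i).comp (LinearMap.fst ℝ _ ℝ))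

theorem greedyPolyhedron_subset_convexHull (h0 : f ∅ ∅ = 0) :
    greedyPolyhedron f ⊆ convexHull ℝ (ternaryEpigraph f) := by
  rintro ⟨x, w⟩ ⟨hbox, hw⟩
  set σ : Fin n → ℝ := fun j => if x j < 0 then -1 else 1
  set δ := Tuple.sort fun i => -|x i|
  have hσ (j : Fin n) : σ j = 1 ∨ σ j = -1 := by
    by_cases h : x j < 0 <;> simp [σ, h]
  have hxσ (j : Fin n) : x j = σ j * |x j| := by
    by_cases h : x j < 0 <;> simp [σ, h, abs_of_neg, abs_of_nonneg, le_of_not_gt]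
  have hδ : Antitone fun i => |x (δ i)| := by
    simpa using (Tuple.monotone_sort fun i => -|x i|).neg
  set v := ∑ j, signedGreedy f δ σ j * x j
  have hmem : (x, v) ∈ convexHull ℝ (ternaryEpigraph f) :=
    SignedGreedy.mk_sum_mul_mem_convexHull h0 hσ (fun i => abs_le.mpr (hbox i)) hxσ hδ
  rw [show (x, w) = ((0 : Fin n → ℝ), w - v) + (x, v) by simp]
  refine add_mem_convexHull_of_add_mem (fun p ⟨S₁, S₂, hS, hp, hfp⟩ => ?_) hmem
  refine ⟨S₁, S₂, hS, by simpa using hp, ?_⟩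
  simp only [Prod.snd_add]
  linarith [hw δ σ hσ]

end Polyhedron

theorem convexHull_bisubmodular_epigraph_general {n : ℕ}
    (f : Finset (Fin n) → Finset (Fin n) → ℝ) (hf : Bisubmodular f)
    (h0 : f ∅ ∅ = 0) :
    convexHull ℝ
        {p : (Fin n → ℝ) × ℝ |
          ∃ S1 S2 : Finset (Fin n), Disjoint S1 S2 ∧
            (∀ i, p.1 i = if i ∈ S1 then (1 : ℝ) else if i ∈ S2 then -1 else 0) ∧
            f S1 S2 ≤ p.2} =
      {p : (Fin n → ℝ) × ℝ |
        (∀ i, -1 ≤ p.1 i ∧ p.1 i ≤ 1) ∧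
        ∀ (δ : Equiv.Perm (Fin n)) (σ : Fin n → ℝ), (∀ j, σ j = 1 ∨ σ j = -1) →
          ∑ j : Fin n, signedGreedy f δ σ j * p.1 j ≤ p.2} := by
  change convexHull ℝ (ternaryEpigraph f) = greedyPolyhedron f
  exact (convexHull_min (ternaryEpigraph_subset_greedyPolyhedron hf h0)
    (convex_greedyPolyhedron f)).antisymm (greedyPolyhedron_subset_convexHull h0)

/-- For bisubmodular `f` with `f(∅,∅) = 0`, the convex hull of the epigraph
`{(x,w) ∈ {0,±1}^n × ℝ : w ≥ f(x)}` (with bisets encoded as ternary vectors)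
is described completely by all extremal poly-bimatroid inequalities
`w ≥ π^⊤ x` (one for each permutation `δ` and sign vector `σ ∈ {±1}^n`)
together with the trivial inequalities `−1 ≤ x_i ≤ 1`. -/
theorem convexHull_bisubmodular_epigraph {n : ℕ} (hn : 0 < n)
    (f : Finset (Fin n) → Finset (Fin n) → ℝ) (hf : Bisubmodular f)
    (h0 : f ∅ ∅ = 0) :
    convexHull ℝ
        {p : (Fin n → ℝ) × ℝ |
          ∃ S1 S2 : Finset (Fin n), Disjoint S1 S2 ∧
            (∀ i, p.1 i = if i ∈ S1 then (1 : ℝ) else if i ∈ S2 then -1 else 0) ∧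
            f S1 S2 ≤ p.2} =
      {p : (Fin n → ℝ) × ℝ |
        (∀ i, -1 ≤ p.1 i ∧ p.1 i ≤ 1) ∧
        ∀ (δ : Equiv.Perm (Fin n)) (σ : Fin n → ℝ), (∀ j, σ j = 1 ∨ σ j = -1) →
          ∑ j : Fin n, signedGreedy f δ σ j * p.1 j ≤ p.2} :=
  convexHull_bisubmodular_epigraph_general f hf h0
end

section
/- A twice continuously differentiable function f : ℝ^n → ℝ is DR-submodular if and only if all entries of its Hessian are nonpositive at every point: ∂²f/∂x_i∂x_j (x) ≤ 0 for all i, j ∈ {1,…,n} and all x ∈ ℝ^n. -/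
/-- `f : ℝ^n → ℝ` is DR-submodular if
`f(x + αe^i) − f(x) ≥ f(y + αe^i) − f(y)` for every coordinate `i`, all
`x ≤ y` (component-wise), and all `α ≥ 0`. -/
def DRSubmodular {n : ℕ} (f : (Fin n → ℝ) → ℝ) : Prop :=
  ∀ (i : Fin n) (x y : Fin n → ℝ), x ≤ y → ∀ α : ℝ, 0 ≤ α →
    f (y + α • (Pi.single i 1 : Fin n → ℝ)) - f y ≤ f (x + α • (Pi.single i 1 : Fin n → ℝ)) - f x

/-!
DR-submodularity of a differentiable `f` says exactly that every partial derivative `∂ᵢf` is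
antitone for the coordinatewise order: one direction divides the defining inequality by `α` and
lets `α → 0⁺`; conversely `t ↦ f(y + t eᵢ) - f(x + t eᵢ)` has derivative
`∂ᵢf(y + t eᵢ) - ∂ᵢf(x + t eᵢ) ≤ 0`, so its value at `α` is at most its value at `0`.
A differentiable function on `ℝⁿ` is antitone iff all its partial derivatives are nonpositive,
since `Dφ(z)(y - x) = ∑ⱼ (yⱼ - xⱼ) ∂ⱼφ(z)`. Applied to `φ = ∂ᵢf` this is the Hessian criterion.
-/

open Filter Topology

theorem hasDerivAt_comp_add_smul {E : Type*} [NormedAddCommGroup E] [NormedSpace ℝ E]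
    {φ : E → ℝ} {x v : E} {t : ℝ} (hφ : DifferentiableAt ℝ φ (x + t • v)) :
    HasDerivAt (fun s : ℝ => φ (x + s • v)) (fderiv ℝ φ (x + t • v) v) t := by
  have hline : HasDerivAt (fun s : ℝ => x + s • v) v t := by
    simpa using ((hasDerivAt_id t).smul_const v).const_add x
  exact hφ.hasFDerivAt.comp_hasDerivAt t hline

section Pi

variable {ι : Type*} [Fintype ι] [DecidableEq ι]

theorem ContinuousLinearMap.apply_eq_sum_mul_single (L : (ι → ℝ) →L[ℝ] ℝ) (v : ι → ℝ) :
    L v = ∑ j, v j * L (Pi.single j 1) := by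
  simpa [← Pi.single_apply, Pi.single_comm] using L.toLinearMap.pi_apply_eq_sum_univ v

theorem antitone_iff_fderiv_single_nonpos {φ : (ι → ℝ) → ℝ} (hφ : Differentiable ℝ φ) :
    Antitone φ ↔ ∀ x j, fderiv ℝ φ x (Pi.single j 1) ≤ 0 := by
  constructor
  · intro hanti x j
    have hline : Monotone fun t : ℝ => x + t • (Pi.single j 1 : ι → ℝ) := fun s t hst =>
      add_le_add_right (smul_le_smul_of_nonneg_right hst (Pi.single_nonneg.2 zero_le_one)) x
    simpa using (hasDerivAt_comp_add_smul (t := 0) (hφ _)).nonpos_of_antitone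
      (hanti.comp_monotone hline)
  · intro hpartial x y hxy
    have hderiv_nonpos (z : ι → ℝ) : fderiv ℝ φ z (y - x) ≤ 0 := by
      rw [ContinuousLinearMap.apply_eq_sum_mul_single]
      exact Finset.sum_nonpos fun j _ =>
        mul_nonpos_of_nonneg_of_nonpos (sub_nonneg.2 (hxy j)) (hpartial z j)
    have hanti : Antitone fun t : ℝ => φ (x + t • (y - x)) :=
      antitone_of_hasDerivAt_nonpos (fun t => hasDerivAt_comp_add_smul (hφ _))
        fun t => hderiv_nonpos _
    simpa using hanti zero_le_one

end Pi

theorem drSubmodular_iff_antitone_fderiv {n : ℕ} {f : (Fin n → ℝ) → ℝ}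
    (hf : Differentiable ℝ f) :
    DRSubmodular f ↔ ∀ i : Fin n, Antitone fun y => fderiv ℝ f y (Pi.single i 1) := by
  constructor
  · intro hDR i x y hxy
    have slope_tendsto (z : Fin n → ℝ) : Tendsto
        (fun t : ℝ => t⁻¹ * (f (z + t • (Pi.single i 1 : Fin n → ℝ)) - f z)) (𝓝[>] 0)
        (𝓝 (fderiv ℝ f z (Pi.single i 1))) := by
      simpa using (hasDerivAt_comp_add_smul (t := 0) (hf _)).tendsto_slope_zero_right
    refine le_of_tendsto_of_tendsto (slope_tendsto y) (slope_tendsto x) ?_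
    exact eventually_nhdsWithin_of_forall fun t (ht : 0 < t) =>
      mul_le_mul_of_nonneg_left (hDR i x y hxy t ht.le) (inv_nonneg.2 ht.le)
  · intro hanti i x y hxy α hα
    set e : Fin n → ℝ := Pi.single i 1
    have hgap : Antitone fun t : ℝ => f (y + t • e) - f (x + t • e) :=
      antitone_of_hasDerivAt_nonpos
        (fun t => (hasDerivAt_comp_add_smul (hf _)).sub (hasDerivAt_comp_add_smul (hf _)))
        fun t => sub_nonpos.2 (hanti i (add_le_add_left hxy _))
    have hgap_le := hgap hα
    simp only [zero_smul, add_zero] at hgap_le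
    linarith

/-- A twice continuously differentiable `f : ℝ^n → ℝ` is DR-submodular iff all
entries of its Hessian are nonpositive at every point. -/
theorem drSubmodular_iff_hessian_nonpos {n : ℕ}
    (f : (Fin n → ℝ) → ℝ) (hf : ContDiff ℝ 2 f) :
    DRSubmodular f ↔
      ∀ (i j : Fin n) (x : Fin n → ℝ),
        fderiv ℝ (fun y => fderiv ℝ f y (Pi.single i 1)) x (Pi.single j 1) ≤ 0 := by
  have hpartial (i : Fin n) : Differentiable ℝ fun y => fderiv ℝ f y (Pi.single i 1) :=
    ((hf.fderiv_right (m := 1) le_rfl).differentiable one_ne_zero).clm_apply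
      (differentiable_const _)
  rw [drSubmodular_iff_antitone_fderiv (hf.differentiable two_ne_zero)]
  exact forall_congr' fun i => (antitone_iff_fderiv_single_nonpos (hpartial i)).trans forall_comm
end

section
/- Let u ∈ ℝ with u > 0 and u ∉ ℤ. For every x₁ ∈ ℝ and every x₂ ∈ ℤ satisfying 0 ≤ x₁ ≤ u and x₁ ≤ x₂, the mixed-integer rounding (MIR) inequality holds: x₂ + (u − x₁)/(u − ⌊u⌋) ≥ ⌈u⌉. -/
/-! This is the basic mixed-integer rounding inequality for `y + s ≥ u` with `s = u - x₁ ≥ 0` and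
`y = x₂`. Write `f` for the fractional part of `u` and `k = ⌈u⌉ - y`. If `k ≤ 0` there is nothing
to prove; otherwise `s ≥ u - y = k - (1 - f) ≥ k f`, since `(k - 1)(1 - f) ≥ 0`. -/

theorem Int.ceil_le_add_div_fract {K : Type*} [Field K] [LinearOrder K] [IsStrictOrderedRing K]
    [FloorRing K] {b s : K} {y : ℤ} (hb : Int.fract b ≠ 0) (hs : 0 ≤ s) (h : b ≤ y + s) :
    (⌈b⌉ : K) ≤ y + s / Int.fract b := by
  have hf : 0 < Int.fract b := (Int.fract_nonneg b).lt_of_ne' hb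
  rw [← sub_le_iff_le_add', le_div_iff₀ hf]
  rcases le_or_gt ⌈b⌉ y with hy | hy
  · have hk : (⌈b⌉ : K) - y ≤ 0 := sub_nonpos.2 (mod_cast hy)
    exact (mul_nonpos_of_nonpos_of_nonneg hk hf.le).trans hs
  · have hk : (1 : K) ≤ ⌈b⌉ - y := by
      rw [le_sub_iff_add_le']
      exact_mod_cast hy
    calc ((⌈b⌉ : K) - y) * Int.fract b ≤ ⌈b⌉ - y - (1 - Int.fract b) := by
          nlinarith [Int.fract_lt_one b]
      _ = b - y := by rw [Int.ceil_eq_add_one_sub_fract hb]; ring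
      _ ≤ s := by linarith

theorem mir_inequality_general (u : ℝ) (hu' : ∀ z : ℤ, (z : ℝ) ≠ u)
    (x₁ : ℝ) (x₂ : ℤ) (hu1 : x₁ ≤ u) (h12 : x₁ ≤ (x₂ : ℝ)) :
    (⌈u⌉ : ℝ) ≤ (x₂ : ℝ) + (u - x₁) / (u - ⌊u⌋) := by
  have hfract : Int.fract u ≠ 0 := Int.fract_ne_zero_iff.2 (by rintro ⟨z, rfl⟩; exact hu' z rfl)
  rw [Int.self_sub_floor]
  exact Int.ceil_le_add_div_fract hfract (sub_nonneg.2 hu1) (by linarith)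

/-- The mixed-integer rounding (MIR) inequality: for `u > 0` with `u ∉ ℤ`, every
`(x₁, x₂) ∈ ℝ × ℤ` with `0 ≤ x₁ ≤ u` and `x₁ ≤ x₂` satisfies
`x₂ + (u − x₁)/(u − ⌊u⌋) ≥ ⌈u⌉`. -/
theorem mir_inequality (u : ℝ) (hu : 0 < u) (hu' : ∀ z : ℤ, (z : ℝ) ≠ u)
    (x₁ : ℝ) (x₂ : ℤ) (h0 : 0 ≤ x₁) (hu1 : x₁ ≤ u) (h12 : x₁ ≤ (x₂ : ℝ)) :
    (⌈u⌉ : ℝ) ≤ (x₂ : ℝ) + (u - x₁) / (u - ⌊u⌋) :=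
  mir_inequality_general u hu' x₁ x₂ hu1 h12
end
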